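/- arXiv:2312.05754 — 3 statements merged into one kernel-verified Lean document; each statement's English description precedes it below -/
import Mathlib

section
/- Let G be a finite simple graph with oriented edges and triangles, and H = B·Bᵀ + Cᵀ·C its Helmholtzian matrix. If distinct edges e and e' share an endpoint and lie in a common triangle, then H_{e,e'} = 0. -/
open Matrix

/-- A finite simple graph together with arbitrary orientations on its edges
(indexed by `E`, each with a tail and a head) and on its triangles
(indexed by `T`, each given as a cyclic triple of vertices). -/
structure GraphData (V E T : Type*) where
  G : SimpleGraph V
  tail : E → V
  head : E → V
  tri1 : T → V
  tri2 : T → V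
  tri3 : T → V
  edge_adj : ∀ e, G.Adj (tail e) (head e)
  edge_inj : ∀ e e' : E, s(tail e, head e) = s(tail e', head e') → e = e'
  edge_surj : ∀ a b, G.Adj a b → ∃ e, s(tail e, head e) = s(a, b)
  tri_adj12 : ∀ τ, G.Adj (tri1 τ) (tri2 τ)
  tri_adj23 : ∀ τ, G.Adj (tri2 τ) (tri3 τ)
  tri_adj31 : ∀ τ, G.Adj (tri3 τ) (tri1 τ)
  tri_inj : ∀ τ τ' : T, ({tri1 τ, tri2 τ, tri3 τ} : Set V) = {tri1 τ', tri2 τ', tri3 τ'} → τ = τ'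
  tri_surj : ∀ a b c, G.Adj a b → G.Adj b c → G.Adj c a →
    ∃ τ, ({tri1 τ, tri2 τ, tri3 τ} : Set V) = {a, b, c}

variable {V E T : Type*}

/-- The signed edge-vertex incidence matrix `B`. -/
def Bmat [DecidableEq V] (D : GraphData V E T) : Matrix E V ℝ := fun e v =>
  if v = D.head e then 1 else if v = D.tail e then -1 else 0

/-- The signed triangle-edge incidence matrix `C`. -/
def Cmat [DecidableEq V] (D : GraphData V E T) : Matrix T E ℝ := fun τ e =>
  if (D.tail e, D.head e) = (D.tri1 τ, D.tri2 τ) ∨ (D.tail e, D.head e) = (D.tri2 τ, D.tri3 τ) ∨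
      (D.tail e, D.head e) = (D.tri3 τ, D.tri1 τ) then 1
  else if (D.head e, D.tail e) = (D.tri1 τ, D.tri2 τ) ∨ (D.head e, D.tail e) = (D.tri2 τ, D.tri3 τ) ∨
      (D.head e, D.tail e) = (D.tri3 τ, D.tri1 τ) then -1
  else 0

/-- The Helmholtzian matrix `H = B * Bᵀ + Cᵀ * C`. -/
def Hmat [DecidableEq V] [Fintype V] [Fintype T] (D : GraphData V E T) : Matrix E E ℝ :=
  Bmat D * (Bmat D)ᵀ + (Cmat D)ᵀ * Cmat D

/-- The nullity of the Helmholtzian matrix, i.e. the dimension of its kernel. -/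
noncomputable def nullity [DecidableEq V] [Fintype V] [Fintype T] [Fintype E]
    (D : GraphData V E T) : ℕ :=
  Module.finrank ℝ ↥(LinearMap.ker (Hmat D).mulVecLin)

/-- The edge `e` lies in the triangle `τ`. -/
def edgeInTri (D : GraphData V E T) (e : E) (τ : T) : Prop :=
  D.tail e ∈ ({D.tri1 τ, D.tri2 τ, D.tri3 τ} : Set V) ∧
  D.head e ∈ ({D.tri1 τ, D.tri2 τ, D.tri3 τ} : Set V)

/-- The triangle degree of an edge: the number of triangles containing it. -/
def triDeg [DecidableEq V] [Fintype T] (D : GraphData V E T) (e : E) : ℕ :=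
  (Finset.univ.filter fun τ =>
    D.tail e ∈ ({D.tri1 τ, D.tri2 τ, D.tri3 τ} : Finset V) ∧
    D.head e ∈ ({D.tri1 τ, D.tri2 τ, D.tri3 τ} : Finset V)).card

/-!
Two distinct edges of a triangle already span its three vertices, so they lie in no other
triangle and only that triangle contributes to `(Cᵀ C) e e'`, while `(B Bᵀ) e e'` is
`B e' (head e) - B e' (tail e)`. Both entries depend only on the positions of `e` and `e'` in
the triangle, and are invariant under relabelling its vertices; on the standard triangle
`0 → 1 → 2` of `Fin 3` the cancellation is a finite check.
-/

section Incidence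

variable {α β : Type*} [DecidableEq α] [DecidableEq β]

/- These are the entries of `Bmat` and `Cmat`, valued in `ℤ` so that identities between them on
`Fin 3` can be checked by `decide`. -/

def orientedIncidence (t h w : α) : ℤ :=
  if w = h then 1 else if w = t then -1 else 0

def cyclicSign (x y z t h : α) : ℤ :=
  if (t, h) = (x, y) ∨ (t, h) = (y, z) ∨ (t, h) = (z, x) then 1
  else if (h, t) = (x, y) ∨ (h, t) = (y, z) ∨ (h, t) = (z, x) then -1
  else 0

theorem orientedIncidence_map {f : α → β} (hf : f.Injective) (t h w : α) :
    orientedIncidence (f t) (f h) (f w) = orientedIncidence t h w := by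
  simp only [orientedIncidence, hf.eq_iff]

theorem cyclicSign_map {f : α → β} (hf : f.Injective) (x y z t h : α) :
    cyclicSign (f x) (f y) (f z) (f t) (f h) = cyclicSign x y z t h := by
  simp only [cyclicSign, Prod.mk.injEq, hf.eq_iff]

theorem mem_of_cyclicSign_ne_zero {x y z t h : α} (hs : cyclicSign x y z t h ≠ 0) :
    t ∈ ({x, y, z} : Set α) ∧ h ∈ ({x, y, z} : Set α) := by
  unfold cyclicSign at hs
  split_ifs at hs with hpos hneg
  · rcases hpos with h' | h' | h' <;> simp_all
  · rcases hneg with h' | h' | h' <;> simp_all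
  · exact (hs rfl).elim

theorem orientedIncidence_sub_add_cyclicSign_mul_fin_three :
    ∀ a b a' b' : Fin 3, a ≠ b → a' ≠ b' → s(a, b) ≠ s(a', b') →
      orientedIncidence a' b' b - orientedIncidence a' b' a +
        cyclicSign 0 1 2 a b * cyclicSign 0 1 2 a' b' = 0 := by
  decide

theorem orientedIncidence_sub_add_cyclicSign_mul {x y z t h t' h' : α}
    (hxy : x ≠ y) (hyz : y ≠ z) (hzx : z ≠ x)
    (ht : t ∈ ({x, y, z} : Set α)) (hh : h ∈ ({x, y, z} : Set α))
    (ht' : t' ∈ ({x, y, z} : Set α)) (hh' : h' ∈ ({x, y, z} : Set α))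
    (hth : t ≠ h) (hth' : t' ≠ h') (hne : s(t, h) ≠ s(t', h')) :
    orientedIncidence t' h' h - orientedIncidence t' h' t +
      cyclicSign x y z t h * cyclicSign x y z t' h' = 0 := by
  set f : Fin 3 → α := ![x, y, z]
  have hf : f.Injective := by
    intro i j
    fin_cases i <;> fin_cases j <;> simp [f, hxy, hyz, hzx, hxy.symm, hyz.symm, hzx.symm]
  have hrange : ∀ v ∈ ({x, y, z} : Set α), ∃ i, f i = v := by
    rintro v (rfl | rfl | rfl)
    exacts [⟨0, rfl⟩, ⟨1, rfl⟩, ⟨2, rfl⟩]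
  obtain ⟨a, rfl⟩ := hrange t ht
  obtain ⟨b, rfl⟩ := hrange h hh
  obtain ⟨a', rfl⟩ := hrange t' ht'
  obtain ⟨b', rfl⟩ := hrange h' hh'
  show orientedIncidence (f a') (f b') (f b) - orientedIncidence (f a') (f b') (f a) +
      cyclicSign (f 0) (f 1) (f 2) (f a) (f b) * cyclicSign (f 0) (f 1) (f 2) (f a') (f b') = 0
  rw [orientedIncidence_map hf, orientedIncidence_map hf, cyclicSign_map hf, cyclicSign_map hf]
  refine orientedIncidence_sub_add_cyclicSign_mul_fin_three a b a' b' (hf.ne_iff.mp hth)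
    (hf.ne_iff.mp hth') fun hab => hne ?_
  simpa using congrArg (Sym2.map f) hab

theorem three_le_card_pair_union_pair {a b c d : α} (hab : a ≠ b) (hcd : c ≠ d)
    (hne : s(a, b) ≠ s(c, d)) : 3 ≤ ({a, b} ∪ {c, d} : Finset α).card := by
  by_contra! hlt
  have hunion : ({a, b} : Finset α) = {a, b} ∪ {c, d} :=
    Finset.eq_of_subset_of_card_le Finset.subset_union_left
      (by rw [Finset.card_pair hab]; omega)
  have hpair : ({c, d} : Finset α) = {a, b} :=
    Finset.eq_of_subset_of_card_le (hunion ▸ Finset.subset_union_right)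
      (by rw [Finset.card_pair hab, Finset.card_pair hcd])
  apply hne
  rw [Sym2.eq_iff, ← Set.pair_eq_pair_iff]
  simpa using congrArg ((↑) : Finset α → Set α) hpair.symm

end Incidence

section Helmholtzian

variable [DecidableEq V] (D : GraphData V E T)

theorem Bmat_apply (e : E) (v : V) :
    Bmat D e v = orientedIncidence (D.tail e) (D.head e) v := by
  unfold Bmat orientedIncidence
  push_cast
  rfl

theorem Cmat_apply (τ : T) (e : E) :
    Cmat D τ e = cyclicSign (D.tri1 τ) (D.tri2 τ) (D.tri3 τ) (D.tail e) (D.head e) := by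
  unfold Cmat cyclicSign
  push_cast
  rfl

theorem Bmat_mul_transpose_apply [Fintype V] (e e' : E) :
    (Bmat D * (Bmat D)ᵀ) e e' = Bmat D e' (D.head e) - Bmat D e' (D.tail e) := by
  have hrow : Bmat D e = Pi.single (D.head e) 1 - Pi.single (D.tail e) 1 := by
    ext v
    simp only [Bmat, Pi.sub_apply, Pi.single_apply]
    split_ifs <;> simp_all [(D.edge_adj e).ne]
  rw [Matrix.mul_apply', hrow, sub_dotProduct, single_dotProduct, single_dotProduct]
  simp

theorem edgeInTri_iff_subset (e : E) (τ : T) :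
    edgeInTri D e τ ↔ ({D.tail e, D.head e} : Finset V) ⊆ {D.tri1 τ, D.tri2 τ, D.tri3 τ} := by
  simp [edgeInTri, Finset.insert_subset_iff]

theorem edgeInTri_of_Cmat_ne_zero {τ : T} {e : E} (h : Cmat D τ e ≠ 0) : edgeInTri D e τ := by
  rw [Cmat_apply, Int.cast_ne_zero] at h
  exact mem_of_cyclicSign_ne_zero h

theorem eq_of_edgeInTri {e e' : E} (hne : e ≠ e') {τ σ : T} (hτ : edgeInTri D e τ)
    (hτ' : edgeInTri D e' τ) (hσ : edgeInTri D e σ) (hσ' : edgeInTri D e' σ) : σ = τ := by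
  have hcard := three_le_card_pair_union_pair (D.edge_adj e).ne (D.edge_adj e').ne
    (mt (D.edge_inj e e') hne)
  have hverts (ρ : T) (h : edgeInTri D e ρ) (h' : edgeInTri D e' ρ) :
      ({D.tail e, D.head e} ∪ {D.tail e', D.head e'} : Finset V) =
        {D.tri1 ρ, D.tri2 ρ, D.tri3 ρ} :=
    Finset.eq_of_subset_of_card_le
      (Finset.union_subset ((edgeInTri_iff_subset D e ρ).mp h)
        ((edgeInTri_iff_subset D e' ρ).mp h'))
      (Finset.card_le_three.trans hcard)
  apply D.tri_inj
  simpa using congrArg ((↑) : Finset V → Set V) ((hverts σ hσ hσ').symm.trans (hverts τ hτ hτ'))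

theorem transpose_Cmat_mul_Cmat_apply [Fintype T] {e e' : E} (hne : e ≠ e') {τ : T}
    (hτ : edgeInTri D e τ) (hτ' : edgeInTri D e' τ) :
    ((Cmat D)ᵀ * Cmat D) e e' = Cmat D τ e * Cmat D τ e' := by
  rw [Matrix.mul_apply]
  refine Finset.sum_eq_single τ (fun σ _ hστ => ?_) (by simp)
  by_contra h
  obtain ⟨hσ, hσ'⟩ := mul_ne_zero_iff.mp h
  exact hστ (eq_of_edgeInTri D hne hτ hτ' (edgeInTri_of_Cmat_ne_zero D hσ)
    (edgeInTri_of_Cmat_ne_zero D hσ'))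

end Helmholtzian

theorem helmholtzian_adjacent_common_triangle_general [DecidableEq V] [Fintype V] [Fintype T]
    (D : GraphData V E T) (e e' : E) (hne : e ≠ e')
    (htri : ∃ τ, edgeInTri D e τ ∧ edgeInTri D e' τ) :
    Hmat D e e' = 0 := by
  obtain ⟨τ, hτ, hτ'⟩ := htri
  rw [Hmat, Matrix.add_apply, Bmat_mul_transpose_apply, transpose_Cmat_mul_Cmat_apply D hne hτ hτ']
  simp only [Bmat_apply, Cmat_apply]
  exact_mod_cast orientedIncidence_sub_add_cyclicSign_mul (D.tri_adj12 τ).ne (D.tri_adj23 τ).ne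
    (D.tri_adj31 τ).ne hτ.1 hτ.2 hτ'.1 hτ'.2 (D.edge_adj e).ne (D.edge_adj e').ne
    (mt (D.edge_inj e e') hne)

theorem helmholtzian_adjacent_common_triangle [DecidableEq V] [Fintype V] [Fintype E] [Fintype T]
    (D : GraphData V E T) (e e' : E) (hne : e ≠ e')
    (hshare : (({D.tail e, D.head e} : Set V) ∩ {D.tail e', D.head e'}).Nonempty)
    (htri : ∃ τ, edgeInTri D e τ ∧ edgeInTri D e' τ) :
    Hmat D e e' = 0 :=
  helmholtzian_adjacent_common_triangle_general D e e' hne htri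
end

section
/- Let G be a finite simple graph with a pendant vertex v (a vertex of degree 1), and let G' = G − v. Then the nullity of the Helmholtzian matrix of G equals the nullity of the Helmholtzian matrix of G'. -/
open Matrix

variable {V E T : Type*}

section Helpers
variable {V E T : Type*} [DecidableEq V] [Fintype E]

/-- The flow function associated to an edge vector `x`. -/
def flow (D : GraphData V E T) (x : E → ℝ) (a b : V) : ℝ :=
  ∑ e, x e * ((if a = D.tail e ∧ b = D.head e then 1 else 0)
    - (if a = D.head e ∧ b = D.tail e then 1 else 0))

variable (D : GraphData V E T)

lemma flow_add (x y : E → ℝ) (a b : V) :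
    flow D (x + y) a b = flow D x a b + flow D y a b := by
  simp [flow, add_mul, Finset.sum_add_distrib]

lemma flow_smul (c : ℝ) (x : E → ℝ) (a b : V) :
    flow D (c • x) a b = c * flow D x a b := by
  simp [flow, Finset.mul_sum, mul_assoc]

lemma flow_antisymm (x : E → ℝ) (a b : V) : flow D x a b = - flow D x b a := by
  unfold flow
  rw [← Finset.sum_neg_distrib]
  refine Finset.sum_congr rfl fun e _ => ?_
  have c1 : (b = D.tail e ∧ a = D.head e) ↔ (a = D.head e ∧ b = D.tail e) := and_comm
  have c2 : (b = D.head e ∧ a = D.tail e) ↔ (a = D.tail e ∧ b = D.head e) := and_comm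
  rw [if_congr c1 rfl rfl, if_congr c2 rfl rfl]
  ring

lemma flow_tail_head (x : E → ℝ) (e : E) :
    flow D x (D.tail e) (D.head e) = x e := by
  unfold flow
  rw [Finset.sum_eq_single e]
  · have hne : D.tail e ≠ D.head e := (D.edge_adj e).ne
    simp [hne.symm]
  · intro e' _ hne
    have h1 : ¬ (D.tail e = D.tail e' ∧ D.head e = D.head e') := by
      rintro ⟨h, h'⟩
      exact hne (D.edge_inj e' e (by rw [Sym2.eq_iff]; exact Or.inl ⟨h.symm, h'.symm⟩))
    have h2 : ¬ (D.tail e = D.head e' ∧ D.head e = D.tail e') := by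
      rintro ⟨h, h'⟩
      exact hne (D.edge_inj e' e (by rw [Sym2.eq_iff]; exact Or.inr ⟨h'.symm, h.symm⟩))
    simp [h1, h2]
  · simp

lemma flow_head_tail (x : E → ℝ) (e : E) :
    flow D x (D.head e) (D.tail e) = - x e := by
  rw [flow_antisymm, flow_tail_head]

lemma flow_of_not_adj (x : E → ℝ) {a b : V} (h : ¬ D.G.Adj a b) :
    flow D x a b = 0 := by
  unfold flow
  refine Finset.sum_eq_zero fun e _ => ?_
  have h1 : ¬ (a = D.tail e ∧ b = D.head e) := by
    rintro ⟨rfl, rfl⟩; exact h (D.edge_adj e)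
  have h2 : ¬ (a = D.head e ∧ b = D.tail e) := by
    rintro ⟨rfl, rfl⟩; exact h (D.edge_adj e).symm
  simp [h1, h2]

end Helpers
section Helpers2
variable {V E T : Type*} [DecidableEq V] [Fintype E] (D : GraphData V E T)

lemma divFlow [Fintype V] (x : E → ℝ) (w : V) :
    ((Bmat D)ᵀ *ᵥ x) w = ∑ a, flow D x a w := by
  unfold flow
  rw [Finset.sum_comm]
  simp only [Matrix.mulVec, dotProduct, Matrix.transpose_apply]
  refine Finset.sum_congr rfl fun e _ => ?_
  have hne : D.tail e ≠ D.head e := (D.edge_adj e).ne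
  have hp : (∑ a, (if a = D.tail e ∧ w = D.head e then (1:ℝ) else 0))
      = if w = D.head e then 1 else 0 := by
    by_cases hw : w = D.head e <;> simp [hw]
  have hq : (∑ a, (if a = D.head e ∧ w = D.tail e then (1:ℝ) else 0))
      = if w = D.tail e then 1 else 0 := by
    by_cases hw : w = D.tail e <;> simp [hw]
  calc Bmat D e w * x e
      = x e * ((if w = D.head e then 1 else 0) - (if w = D.tail e then 1 else 0)) := by
        unfold Bmat
        by_cases h1 : w = D.head e <;> by_cases h2 : w = D.tail e <;>
          simp [h1, h2, hne, hne.symm] <;> first | (exact absurd (h2.symm.trans h1) hne) | ring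
    _ = ∑ a, x e * ((if a = D.tail e ∧ w = D.head e then 1 else 0)
          - (if a = D.head e ∧ w = D.tail e then 1 else 0)) := by
        rw [← Finset.mul_sum, Finset.sum_sub_distrib, hp, hq]

lemma Cmat_decomp (τ : T) (e : E) :
    Cmat D τ e =
      ((if D.tri1 τ = D.tail e ∧ D.tri2 τ = D.head e then (1:ℝ) else 0)
        - (if D.tri1 τ = D.head e ∧ D.tri2 τ = D.tail e then 1 else 0))
      + ((if D.tri2 τ = D.tail e ∧ D.tri3 τ = D.head e then 1 else 0)
        - (if D.tri2 τ = D.head e ∧ D.tri3 τ = D.tail e then 1 else 0))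
      + ((if D.tri3 τ = D.tail e ∧ D.tri1 τ = D.head e then 1 else 0)
        - (if D.tri3 τ = D.head e ∧ D.tri1 τ = D.tail e then 1 else 0)) := by
  have h12 : D.tri1 τ ≠ D.tri2 τ := (D.tri_adj12 τ).ne
  have h23 : D.tri2 τ ≠ D.tri3 τ := (D.tri_adj23 τ).ne
  have h31 : D.tri3 τ ≠ D.tri1 τ := (D.tri_adj31 τ).ne
  have hth : D.tail e ≠ D.head e := (D.edge_adj e).ne
  unfold Cmat
  simp only [Prod.mk.injEq]
  by_cases h1 : (D.tail e = D.tri1 τ ∧ D.head e = D.tri2 τ) ∨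
      (D.tail e = D.tri2 τ ∧ D.head e = D.tri3 τ) ∨ (D.tail e = D.tri3 τ ∧ D.head e = D.tri1 τ)
  · rw [if_pos h1]
    rcases h1 with ⟨ha, hb⟩ | ⟨ha, hb⟩ | ⟨ha, hb⟩ <;>
      simp [ha, hb, h12, h23, h31, h12.symm, h23.symm, h31.symm]
  rw [if_neg h1]
  by_cases h2 : (D.head e = D.tri1 τ ∧ D.tail e = D.tri2 τ) ∨
      (D.head e = D.tri2 τ ∧ D.tail e = D.tri3 τ) ∨ (D.head e = D.tri3 τ ∧ D.tail e = D.tri1 τ)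
  · rw [if_pos h2]
    rcases h2 with ⟨ha, hb⟩ | ⟨ha, hb⟩ | ⟨ha, hb⟩ <;>
      simp [ha, hb, h12, h23, h31, h12.symm, h23.symm, h31.symm]
  · rw [if_neg h2]
    push_neg at h1 h2
    obtain ⟨n1, n2, n3⟩ := h1
    obtain ⟨m1, m2, m3⟩ := h2
    have k1 : ¬(D.tri1 τ = D.tail e ∧ D.tri2 τ = D.head e) := by
      rintro ⟨p, q⟩; exact (n1 p.symm) q.symm
    have k2 : ¬(D.tri2 τ = D.tail e ∧ D.tri3 τ = D.head e) := by
      rintro ⟨p, q⟩; exact (n2 p.symm) q.symm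
    have k3 : ¬(D.tri3 τ = D.tail e ∧ D.tri1 τ = D.head e) := by
      rintro ⟨p, q⟩; exact (n3 p.symm) q.symm
    have l1 : ¬(D.tri1 τ = D.head e ∧ D.tri2 τ = D.tail e) := by
      rintro ⟨p, q⟩; exact (m1 p.symm) q.symm
    have l2 : ¬(D.tri2 τ = D.head e ∧ D.tri3 τ = D.tail e) := by
      rintro ⟨p, q⟩; exact (m2 p.symm) q.symm
    have l3 : ¬(D.tri3 τ = D.head e ∧ D.tri1 τ = D.tail e) := by
      rintro ⟨p, q⟩; exact (m3 p.symm) q.symm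
    simp [k1, k2, k3, l1, l2, l3]

lemma curlFlow (x : E → ℝ) (τ : T) :
    (Cmat D *ᵥ x) τ = flow D x (D.tri1 τ) (D.tri2 τ) + flow D x (D.tri2 τ) (D.tri3 τ)
      + flow D x (D.tri3 τ) (D.tri1 τ) := by
  unfold flow
  rw [← Finset.sum_add_distrib, ← Finset.sum_add_distrib]
  simp only [Matrix.mulVec, dotProduct]
  refine Finset.sum_congr rfl fun e _ => ?_
  rw [Cmat_decomp D τ e]
  ring

lemma memKer_iff [Fintype V] [Fintype T] (x : E → ℝ) :
    Hmat D *ᵥ x = 0 ↔ ((Bmat D)ᵀ *ᵥ x = 0 ∧ Cmat D *ᵥ x = 0) := by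
  constructor
  · intro h
    have e1 : dotProduct x ((Bmat D * (Bmat D)ᵀ) *ᵥ x)
        = dotProduct ((Bmat D)ᵀ *ᵥ x) ((Bmat D)ᵀ *ᵥ x) := by
      rw [← Matrix.mulVec_mulVec, Matrix.dotProduct_mulVec, ← Matrix.mulVec_transpose]
    have e2 : dotProduct x (((Cmat D)ᵀ * Cmat D) *ᵥ x)
        = dotProduct (Cmat D *ᵥ x) (Cmat D *ᵥ x) := by
      rw [← Matrix.mulVec_mulVec, Matrix.dotProduct_mulVec, Matrix.vecMul_transpose]
    have h0 : dotProduct x (Hmat D *ᵥ x) = 0 := by rw [h]; simp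
    rw [Hmat, Matrix.add_mulVec, dotProduct_add, e1, e2] at h0
    have hb : (0:ℝ) ≤ dotProduct ((Bmat D)ᵀ *ᵥ x) ((Bmat D)ᵀ *ᵥ x) :=
      Finset.sum_nonneg fun i _ => mul_self_nonneg _
    have hc : (0:ℝ) ≤ dotProduct (Cmat D *ᵥ x) (Cmat D *ᵥ x) :=
      Finset.sum_nonneg fun i _ => mul_self_nonneg _
    obtain ⟨hb0, hc0⟩ := (add_eq_zero_iff_of_nonneg hb hc).mp h0
    exact ⟨dotProduct_self_eq_zero.mp hb0, dotProduct_self_eq_zero.mp hc0⟩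
  · rintro ⟨h1, h2⟩
    rw [Hmat, Matrix.add_mulVec, ← Matrix.mulVec_mulVec, ← Matrix.mulVec_mulVec, h1, h2,
      Matrix.mulVec_zero, Matrix.mulVec_zero, add_zero]

lemma ker_iff_flows [Fintype V] [Fintype T] (x : E → ℝ) :
    Hmat D *ᵥ x = 0 ↔
      ((∀ w, ∑ a, flow D x a w = 0) ∧
        (∀ τ, flow D x (D.tri1 τ) (D.tri2 τ) + flow D x (D.tri2 τ) (D.tri3 τ)
          + flow D x (D.tri3 τ) (D.tri1 τ) = 0)) := by
  rw [memKer_iff, funext_iff, funext_iff]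
  simp only [Pi.zero_apply]
  exact and_congr (forall_congr' fun w => by rw [divFlow])
    (forall_congr' fun τ => by rw [curlFlow])

lemma cyc_zero {α : Type*} (g : α → α → ℝ) (hg : ∀ a b, g a b = - g b a)
    {a1 a2 a3 b1 b2 b3 : α} (h12 : b1 ≠ b2) (h23 : b2 ≠ b3) (h31 : b3 ≠ b1)
    (hset : ({b1, b2, b3} : Set α) = {a1, a2, a3})
    (h : g a1 a2 + g a2 a3 + g a3 a1 = 0) :
    g b1 b2 + g b2 b3 + g b3 b1 = 0 := by
  have m1 : b1 = a1 ∨ b1 = a2 ∨ b1 = a3 := by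
    have : b1 ∈ ({a1, a2, a3} : Set α) := by
      rw [← hset]; simp
    simpa using this
  have m2 : b2 = a1 ∨ b2 = a2 ∨ b2 = a3 := by
    have : b2 ∈ ({a1, a2, a3} : Set α) := by
      rw [← hset]; simp
    simpa using this
  have m3 : b3 = a1 ∨ b3 = a2 ∨ b3 = a3 := by
    have : b3 ∈ ({a1, a2, a3} : Set α) := by
      rw [← hset]; simp
    simpa using this
  rcases m1 with h1 | h1 | h1 <;> rcases m2 with h2 | h2 | h2 <;>
    rcases m3 with h3 | h3 | h3 <;>
    first
      | exact absurd (h1.trans h2.symm) h12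
      | exact absurd (h2.trans h3.symm) h23
      | exact absurd (h3.trans h1.symm) h31
      | (rw [h1, h2, h3]
         linarith [hg a1 a2, hg a2 a3, hg a3 a1, hg a1 a3, hg a2 a1, hg a3 a2])

/-- linear map from edge functions to edge functions of another indexing, via flows -/
def PhiL {E'' : Type*} (t h : E'' → V) : (E → ℝ) →ₗ[ℝ] (E'' → ℝ) where
  toFun x e' := flow D x (t e') (h e')
  map_add' x y := funext fun e' => flow_add D x y _ _
  map_smul' c x := funext fun e' => flow_smul D c x _ _

def PsiL {V' E' T' F : Type*} [DecidableEq V'] [Fintype E'] (D' : GraphData V' E' T')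
    (P : F → Prop) [DecidablePred P] (tl hd : (e : F) → P e → V') :
    (E' → ℝ) →ₗ[ℝ] (F → ℝ) where
  toFun y e := if h : P e then flow D' y (tl e h) (hd e h) else 0
  map_add' y z := funext fun e => by
    by_cases h : P e <;> simp [h, flow_add]
  map_smul' c y := funext fun e => by
    by_cases h : P e <;> simp [h, flow_smul]

end Helpers2
theorem helmholtzian_nullity_pendant {V E T E' T' : Type*}
    [DecidableEq V] [Fintype V] [Fintype E] [Fintype T] [Fintype E'] [Fintype T']
    (D : GraphData V E T) (v : V) (hpendant : ∃! u, D.G.Adj v u)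
    (D' : GraphData {x : V // x ≠ v} E' T')
    (hG' : ∀ a b : {x : V // x ≠ v}, D'.G.Adj a b ↔ D.G.Adj (a : V) (b : V)) :
    nullity D = nullity D' := by
  classical
  obtain ⟨u, hvu, huniq⟩ := hpendant
  obtain ⟨e0, he0⟩ := D.edge_surj v u hvu
  have he0' : (D.tail e0 = v ∧ D.head e0 = u) ∨ (D.tail e0 = u ∧ D.head e0 = v) :=
    Sym2.eq_iff.mp he0
  have hinc : ∀ e : E, D.tail e = v ∨ D.head e = v → e = e0 := by
    intro e he
    apply D.edge_inj e e0
    rw [he0, Sym2.eq_iff]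
    rcases he with h | h
    · exact Or.inl ⟨h, huniq _ (by rw [← h]; exact D.edge_adj e)⟩
    · exact Or.inr ⟨huniq _ (by rw [← h]; exact (D.edge_adj e).symm), h⟩
  have hnotinc : ∀ e : E, e ≠ e0 → D.tail e ≠ v ∧ D.head e ≠ v := fun e he =>
    ⟨fun h => he (hinc e (Or.inl h)), fun h => he (hinc e (Or.inr h))⟩
  have htri1 : ∀ τ : T, D.tri1 τ ≠ v := by
    intro τ h
    have h2 : D.tri2 τ = u := huniq _ (by rw [← h]; exact D.tri_adj12 τ)
    have h3 : D.tri3 τ = u := huniq _ (by rw [← h]; exact (D.tri_adj31 τ).symm)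
    exact (D.tri_adj23 τ).ne (h2.trans h3.symm)
  have htri2 : ∀ τ : T, D.tri2 τ ≠ v := by
    intro τ h
    have h3 : D.tri3 τ = u := huniq _ (by rw [← h]; exact D.tri_adj23 τ)
    have h1 : D.tri1 τ = u := huniq _ (by rw [← h]; exact (D.tri_adj12 τ).symm)
    exact (D.tri_adj31 τ).ne (h3.trans h1.symm)
  have htri3 : ∀ τ : T, D.tri3 τ ≠ v := by
    intro τ h
    have h1 : D.tri1 τ = u := huniq _ (by rw [← h]; exact D.tri_adj31 τ)
    have h2 : D.tri2 τ = u := huniq _ (by rw [← h]; exact (D.tri_adj23 τ).symm)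
    exact (D.tri_adj12 τ).ne (h1.trans h2.symm)
  -- the transfer maps
  let Φ : (E → ℝ) →ₗ[ℝ] (E' → ℝ) :=
    PhiL D (fun e' => ↑(D'.tail e')) (fun e' => ↑(D'.head e'))
  let Ψ : (E' → ℝ) →ₗ[ℝ] (E → ℝ) :=
    PsiL D' (fun e => D.tail e ≠ v ∧ D.head e ≠ v)
      (fun e h => ⟨D.tail e, h.1⟩) (fun e h => ⟨D.head e, h.2⟩)
  have hΦval : ∀ (x : E → ℝ) (e' : E'),
      Φ x e' = flow D x ↑(D'.tail e') ↑(D'.head e') := fun _ _ => rfl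
  have hΨval : ∀ (y : E' → ℝ) (e : E),
      Ψ y e = if h : D.tail e ≠ v ∧ D.head e ≠ v then
        flow D' y ⟨D.tail e, h.1⟩ ⟨D.head e, h.2⟩ else 0 := fun _ _ => rfl
  have hΨe0 : ∀ y : E' → ℝ, Ψ y e0 = 0 := by
    intro y
    rw [hΨval, dif_neg]
    rcases he0' with ⟨h1, _⟩ | ⟨_, h2⟩
    · exact fun hc => hc.1 h1
    · exact fun hc => hc.2 h2
  -- transfer of flows
  have hF4 : ∀ (x : E → ℝ) (a b : {x : V // x ≠ v}),
      flow D' (Φ x) a b = flow D x ↑a ↑b := by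
    intro x a b
    by_cases hadj : D'.G.Adj a b
    · obtain ⟨e', he'⟩ := D'.edge_surj a b hadj
      rcases Sym2.eq_iff.mp he' with ⟨h1, h2⟩ | ⟨h1, h2⟩
      · rw [← h1, ← h2, flow_tail_head]
        exact hΦval x e'
      · rw [← h1, ← h2, flow_head_tail, hΦval x e',
          flow_antisymm D x ↑(D'.head e') ↑(D'.tail e')]
    · rw [flow_of_not_adj D' _ hadj, flow_of_not_adj D x (fun hc => hadj ((hG' a b).mpr hc))]
  have hF4' : ∀ (y : E' → ℝ) (a b : V) (ha : a ≠ v) (hb : b ≠ v),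
      flow D (Ψ y) a b = flow D' y ⟨a, ha⟩ ⟨b, hb⟩ := by
    intro y a b ha hb
    by_cases hadj : D.G.Adj a b
    · obtain ⟨e, he⟩ := D.edge_surj a b hadj
      rcases Sym2.eq_iff.mp he with ⟨h1, h2⟩ | ⟨h1, h2⟩
      · subst h1; subst h2
        rw [flow_tail_head, hΨval, dif_pos (⟨ha, hb⟩ : D.tail e ≠ v ∧ D.head e ≠ v)]
      · subst h1; subst h2
        rw [flow_head_tail, hΨval,
          dif_pos (⟨hb, ha⟩ : D.tail e ≠ v ∧ D.head e ≠ v), flow_antisymm D' y, neg_neg]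
    · exact (flow_of_not_adj D _ hadj).trans
        (flow_of_not_adj D' y (fun hc => hadj ((hG' _ _).mp hc))).symm
  have hF4'' : ∀ (y : E' → ℝ) (a b : V), a = v ∨ b = v → flow D (Ψ y) a b = 0 := by
    intro y a b hab
    by_cases hadj : D.G.Adj a b
    · obtain ⟨e, he⟩ := D.edge_surj a b hadj
      have hee : e = e0 := by
        apply hinc
        rcases Sym2.eq_iff.mp he with ⟨h1, h2⟩ | ⟨h1, h2⟩ <;> rcases hab with rfl | rfl
        · exact Or.inl h1
        · exact Or.inr h2
        · exact Or.inr h2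
        · exact Or.inl h1
      subst hee
      rcases Sym2.eq_iff.mp he with ⟨h1, h2⟩ | ⟨h1, h2⟩
      · rw [← h1, ← h2, flow_tail_head, hΨe0]
      · rw [← h1, ← h2, flow_head_tail, hΨe0, neg_zero]
    · exact flow_of_not_adj D _ hadj
  have hflowv : ∀ (x : E → ℝ), x e0 = 0 → ∀ a b : V, a = v ∨ b = v → flow D x a b = 0 := by
    intro x hx0 a b hab
    by_cases hadj : D.G.Adj a b
    · obtain ⟨e, he⟩ := D.edge_surj a b hadj
      have hee : e = e0 := by
        apply hinc
        rcases Sym2.eq_iff.mp he with ⟨h1, h2⟩ | ⟨h1, h2⟩ <;> rcases hab with rfl | rfl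
        · exact Or.inl h1
        · exact Or.inr h2
        · exact Or.inr h2
        · exact Or.inl h1
      subst hee
      rcases Sym2.eq_iff.mp he with ⟨h1, h2⟩ | ⟨h1, h2⟩
      · rw [← h1, ← h2, flow_tail_head]
        exact hx0
      · rw [← h1, ← h2, flow_head_tail, hx0, neg_zero]
    · exact flow_of_not_adj D _ hadj
  -- pendant edge value vanishes on the kernel
  have hxe0 : ∀ x : E → ℝ, (∀ w, ∑ a, flow D x a w = 0) → x e0 = 0 := by
    intro x hx
    have hterm : ∀ a : V, a ≠ u → flow D x a v = 0 := by
      intro a ha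
      exact flow_of_not_adj D x (fun hc => ha (huniq a hc.symm))
    have hsum : ∑ a, flow D x a v = flow D x u v :=
      Finset.sum_eq_single u (fun a _ ha => hterm a ha)
        (fun h => absurd (Finset.mem_univ u) h)
    have hflowuv : flow D x u v = - x e0 ∨ flow D x u v = x e0 := by
      rcases he0' with ⟨h1, h2⟩ | ⟨h1, h2⟩
      · left; rw [← h1, ← h2, flow_head_tail]
      · right; rw [← h1, ← h2, flow_tail_head]
    have h0 := hx v
    rw [hsum] at h0
    rcases hflowuv with h | h <;> rw [h] at h0 <;> linarith
  -- kernel characterizations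
  have hkermem : ∀ x : E → ℝ, x ∈ LinearMap.ker (Hmat D).mulVecLin ↔
      ((∀ w, ∑ a, flow D x a w = 0) ∧
        (∀ τ, flow D x (D.tri1 τ) (D.tri2 τ) + flow D x (D.tri2 τ) (D.tri3 τ)
          + flow D x (D.tri3 τ) (D.tri1 τ) = 0)) := by
    intro x
    rw [LinearMap.mem_ker, Matrix.mulVecLin_apply, ker_iff_flows]
  have hkermem' : ∀ y : E' → ℝ, y ∈ LinearMap.ker (Hmat D').mulVecLin ↔
      ((∀ w, ∑ a, flow D' y a w = 0) ∧
        (∀ τ, flow D' y (D'.tri1 τ) (D'.tri2 τ) + flow D' y (D'.tri2 τ) (D'.tri3 τ)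
          + flow D' y (D'.tri3 τ) (D'.tri1 τ) = 0)) := by
    intro y
    rw [LinearMap.mem_ker, Matrix.mulVecLin_apply, ker_iff_flows]
  -- summation over the vertex subtype
  have hsub : ∀ f : V → ℝ, ∑ a : {x : V // x ≠ v}, f ↑a = ∑ a ∈ Finset.univ.erase v, f a := by
    intro f
    exact (Finset.sum_subtype _ (fun a => by simp) f).symm
  have herase : ∀ f : V → ℝ, ∑ a ∈ Finset.univ.erase v, f a = (∑ a, f a) - f v := by
    intro f
    have h := Finset.add_sum_erase Finset.univ f (Finset.mem_univ v)
    linarith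
  -- the kernel transfers
  have hΦK : ∀ x ∈ LinearMap.ker (Hmat D).mulVecLin, Φ x ∈ LinearMap.ker (Hmat D').mulVecLin := by
    intro x hx
    rw [hkermem] at hx
    obtain ⟨hdiv, hcurl⟩ := hx
    have hx0 : x e0 = 0 := hxe0 x hdiv
    rw [hkermem']
    constructor
    · intro w
      calc ∑ a : {x : V // x ≠ v}, flow D' (Φ x) a w
          = ∑ a : {x : V // x ≠ v}, flow D x ↑a ↑w :=
            Finset.sum_congr rfl fun a _ => hF4 x a w
        _ = ∑ a ∈ Finset.univ.erase v, flow D x a ↑w := hsub (fun a => flow D x a ↑w)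
        _ = (∑ a, flow D x a ↑w) - flow D x v ↑w := herase _
        _ = 0 := by rw [hdiv ↑w, hflowv x hx0 v ↑w (Or.inl rfl)]; ring
    · intro τ'
      obtain ⟨τ, hτ⟩ := D.tri_surj ↑(D'.tri1 τ') ↑(D'.tri2 τ') ↑(D'.tri3 τ')
        ((hG' _ _).mp (D'.tri_adj12 τ')) ((hG' _ _).mp (D'.tri_adj23 τ'))
        ((hG' _ _).mp (D'.tri_adj31 τ'))
      rw [hF4, hF4, hF4]
      refine cyc_zero (flow D x) (flow_antisymm D x) ?_ ?_ ?_ hτ.symm (hcurl τ)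
      · exact fun hc => (D'.tri_adj12 τ').ne (Subtype.ext hc)
      · exact fun hc => (D'.tri_adj23 τ').ne (Subtype.ext hc)
      · exact fun hc => (D'.tri_adj31 τ').ne (Subtype.ext hc)
  have hΨK : ∀ y ∈ LinearMap.ker (Hmat D').mulVecLin, Ψ y ∈ LinearMap.ker (Hmat D).mulVecLin := by
    intro y hy
    rw [hkermem'] at hy
    obtain ⟨hdiv', hcurl'⟩ := hy
    rw [hkermem]
    constructor
    · intro w
      by_cases hw : w = v
      · subst hw
        exact Finset.sum_eq_zero fun a _ => hF4'' y a w (Or.inr rfl)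
      · have h1 : ∑ a, flow D (Ψ y) a w
            = flow D (Ψ y) v w + ∑ a ∈ Finset.univ.erase v, flow D (Ψ y) a w :=
          (Finset.add_sum_erase _ _ (Finset.mem_univ v)).symm
        rw [h1, hF4'' y v w (Or.inl rfl), zero_add, ← hsub (fun a => flow D (Ψ y) a w)]
        calc ∑ a : {x : V // x ≠ v}, flow D (Ψ y) ↑a w
            = ∑ a : {x : V // x ≠ v}, flow D' y a ⟨w, hw⟩ :=
              Finset.sum_congr rfl fun a _ => by rw [hF4' y ↑a w a.2 hw]
          _ = 0 := hdiv' ⟨w, hw⟩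
    · intro τ
      rw [hF4' y _ _ (htri1 τ) (htri2 τ), hF4' y _ _ (htri2 τ) (htri3 τ),
        hF4' y _ _ (htri3 τ) (htri1 τ)]
      obtain ⟨τ', hτ'⟩ := D'.tri_surj ⟨D.tri1 τ, htri1 τ⟩ ⟨D.tri2 τ, htri2 τ⟩ ⟨D.tri3 τ, htri3 τ⟩
        ((hG' _ _).mpr (D.tri_adj12 τ)) ((hG' _ _).mpr (D.tri_adj23 τ))
        ((hG' _ _).mpr (D.tri_adj31 τ))
      refine cyc_zero (flow D' y) (flow_antisymm D' y) ?_ ?_ ?_ hτ'.symm (hcurl' τ')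
      · exact fun hc => (D.tri_adj12 τ).ne (congrArg Subtype.val hc)
      · exact fun hc => (D.tri_adj23 τ).ne (congrArg Subtype.val hc)
      · exact fun hc => (D.tri_adj31 τ).ne (congrArg Subtype.val hc)
  -- the two maps are mutually inverse on the kernels
  have hΨΦ : ∀ x ∈ LinearMap.ker (Hmat D).mulVecLin, Ψ (Φ x) = x := by
    intro x hx
    rw [hkermem] at hx
    have hx0 : x e0 = 0 := hxe0 x hx.1
    funext e
    by_cases he : e = e0
    · rw [he, hΨe0]
      exact hx0.symm
    · obtain ⟨h1, h2⟩ := hnotinc e he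
      rw [hΨval, dif_pos (⟨h1, h2⟩ : D.tail e ≠ v ∧ D.head e ≠ v),
        hF4 x ⟨D.tail e, h1⟩ ⟨D.head e, h2⟩]
      exact flow_tail_head D x e
  have hΦΨ : ∀ y : E' → ℝ, Φ (Ψ y) = y := by
    intro y
    funext e'
    rw [hΦval, hF4' y _ _ (D'.tail e').2 (D'.head e').2]
    exact flow_tail_head D' y e'
  unfold nullity
  exact LinearEquiv.finrank_eq (LinearEquiv.ofLinear (Φ.restrict hΦK) (Ψ.restrict hΨK)
    (LinearMap.ext fun y => Subtype.ext (by
      simpa [LinearMap.restrict_apply] using hΦΨ ↑y))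
    (LinearMap.ext fun x => Subtype.ext (by
      simpa [LinearMap.restrict_apply] using hΨΦ ↑x x.2)))
end

section
/- Let G be a finite simple graph with a cut-edge e (a bridge). Then the nullity of the Helmholtzian matrix of G equals the nullity of the Helmholtzian matrix of the contraction G/e. -/
open Matrix

variable {V E T : Type*}

/-!
A vector `x` lies in the kernel of `H = B Bᵀ + Cᵀ C` iff `Bᵀ x = 0` and `C x = 0`. Recording an
edge vector as the antisymmetric function `(a, b) ↦ ±x_e` on adjacent pairs of vertices turns this
into a condition on the graph alone: the function is divergence-free at every vertex and sums to
zero around every triangle. Merging `v` into `u` pushes such a flow forward by summing over the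
fibres of the quotient map; divergence is additive over fibres, so the pushforward is again
harmonic. Since `u` and `v` have no common neighbour and no path `u - a - b - v` avoids the bridge,
every edge and every triangle of `G / uv` lifts to exactly one of `G`, so flows on `G / uv` pull
back to `G`. A divergence-free flow carries nothing across the bridge: its net flow into the side of
`u` in `G - uv` is its value on `vu`. Hence pushforward and pullback are mutually inverse on
harmonic flows.
-/

open Finset

lemma Finset.sum_sum_eq_zero_of_antisymm {ι : Type*} {f : ι → ι → ℝ}
    (hf : ∀ a b, f a b = -f b a) (S : Finset ι) : ∑ a ∈ S, ∑ b ∈ S, f a b = 0 := by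
  have h : ∑ a ∈ S, ∑ b ∈ S, f a b = -∑ a ∈ S, ∑ b ∈ S, f a b := by
    conv_lhs => rw [sum_comm]
    simp only [← sum_neg_distrib, ← hf]
  linarith

lemma Finset.sum_sum_eq_of_cut {ι : Type*} [Fintype ι] [DecidableEq ι] {f : ι → ι → ℝ}
    (hf : ∀ a b, f a b = -f b a) {S : Finset ι} {u v : ι} (hu : u ∈ S) (hv : v ∉ S)
    (hS : ∀ a ∉ S, ∀ b ∈ S, f a b ≠ 0 → a = v ∧ b = u) :
    ∑ b ∈ S, ∑ a, f a b = f v u := by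
  calc ∑ b ∈ S, ∑ a, f a b = ∑ b ∈ S, ∑ a ∈ S, f a b + ∑ b ∈ S, ∑ a ∈ Sᶜ, f a b := by
        rw [← sum_add_distrib]; simp only [sum_add_sum_compl]
    _ = ∑ b ∈ S, ∑ a ∈ Sᶜ, f a b := by
        rw [sum_sum_eq_zero_of_antisymm (fun a b => hf b a), zero_add]
    _ = f v u := by
        rw [sum_eq_single_of_mem u hu, sum_eq_single_of_mem v (mem_compl.mpr hv)]
        · intro a ha hav
          by_contra h
          exact hav (hS a (mem_compl.mp ha) u hu h).1
        · intro b hbS hbu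
          refine sum_eq_zero fun a ha => ?_
          by_contra h
          exact hbu (hS a (mem_compl.mp ha) b hbS h).2

lemma cyclic_sum_eq_zero_of_set_eq {α : Type*} {f : α → α → ℝ} (hf : ∀ a b, f a b = -f b a)
    {a b c x y z : α} (hab : a ≠ b) (hbc : b ≠ c) (hca : c ≠ a)
    (hs : ({x, y, z} : Set α) = {a, b, c}) (hxyz : f x y + f y z + f z x = 0) :
    f a b + f b c + f c a = 0 := by
  have mem : ∀ w ∈ ({a, b, c} : Set α), w = x ∨ w = y ∨ w = z := by
    intro w hw
    simpa [← hs] using hw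
  rcases mem a (by simp) with rfl | rfl | rfl <;> rcases mem b (by simp) with rfl | rfl | rfl <;>
    rcases mem c (by simp) with rfl | rfl | rfl <;> first
    | exact absurd rfl hab | exact absurd rfl hbc | exact absurd rfl hca
    | linarith [hf a b, hf b c, hf c a]

lemma Matrix.transpose_mul_self_add_mulVec_eq_zero_iff {m n k : Type*} [Fintype m] [Fintype n]
    [Fintype k] (A : Matrix m n ℝ) (M : Matrix k n ℝ) (x : n → ℝ) :
    (Aᵀ * A + Mᵀ * M) *ᵥ x = 0 ↔ A *ᵥ x = 0 ∧ M *ᵥ x = 0 := by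
  refine ⟨fun h => ?_, fun ⟨hA, hM⟩ => by simp [add_mulVec, ← mulVec_mulVec, hA, hM]⟩
  have hsum : (A *ᵥ x) ⬝ᵥ (A *ᵥ x) + (M *ᵥ x) ⬝ᵥ (M *ᵥ x) = 0 := by
    simpa [add_mulVec, dotProduct_add, ← mulVec_mulVec, dotProduct_mulVec, vecMul_transpose]
      using congrArg (x ⬝ᵥ ·) h
  have hA : 0 ≤ (A *ᵥ x) ⬝ᵥ (A *ᵥ x) := Fintype.sum_nonneg fun i => mul_self_nonneg _
  have hM : 0 ≤ (M *ᵥ x) ⬝ᵥ (M *ᵥ x) := Fintype.sum_nonneg fun i => mul_self_nonneg _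
  exact ⟨dotProduct_self_eq_zero.mp (by linarith), dotProduct_self_eq_zero.mp (by linarith)⟩

namespace SimpleGraph

/-- Through `GraphData.flow`, `sum_left_eq_zero` is `Bᵀ x = 0` and `cyclic_sum_eq_zero` is
`C x = 0`. -/
structure IsHarmonicFlow [Fintype V] (G : SimpleGraph V) (f : V → V → ℝ) : Prop where
  antisymm : ∀ a b, f a b = -f b a
  eq_zero_of_not_adj : ∀ a b, ¬G.Adj a b → f a b = 0
  sum_left_eq_zero : ∀ w, ∑ a, f a w = 0
  cyclic_sum_eq_zero : ∀ a b c, G.Adj a b → G.Adj b c → G.Adj c a → f a b + f b c + f c a = 0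

def harmonicFlows [Fintype V] (G : SimpleGraph V) : Submodule ℝ (V → V → ℝ) where
  carrier := {f | G.IsHarmonicFlow f}
  zero_mem' := ⟨by simp, by simp, by simp, by simp⟩
  add_mem' {f g} hf hg :=
    ⟨fun a b => by simp only [Pi.add_apply, hf.antisymm a b, hg.antisymm a b]; ring,
      fun a b h => by simp [hf.eq_zero_of_not_adj a b h, hg.eq_zero_of_not_adj a b h],
      fun w => by simp [sum_add_distrib, hf.sum_left_eq_zero w, hg.sum_left_eq_zero w],
      fun a b c h₁ h₂ h₃ => by
        simp only [Pi.add_apply]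
        linear_combination hf.cyclic_sum_eq_zero a b c h₁ h₂ h₃ +
          hg.cyclic_sum_eq_zero a b c h₁ h₂ h₃⟩
  smul_mem' r f hf :=
    ⟨fun a b => by simp [hf.antisymm a b], fun a b h => by simp [hf.eq_zero_of_not_adj a b h],
      fun w => by simp [← mul_sum, hf.sum_left_eq_zero w],
      fun a b c h₁ h₂ h₃ => by
        simp only [Pi.smul_apply, smul_eq_mul]
        linear_combination r * hf.cyclic_sum_eq_zero a b c h₁ h₂ h₃⟩

end SimpleGraph

namespace GraphData

variable [DecidableEq V] (D : GraphData V E T)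

def edgeSign (e : E) (a b : V) : ℝ :=
  (if D.tail e = a ∧ D.head e = b then 1 else 0) - (if D.tail e = b ∧ D.head e = a then 1 else 0)

lemma edgeSign_swap (e : E) (a b : V) : D.edgeSign e a b = -D.edgeSign e b a := by
  unfold edgeSign
  ring

lemma edgeSign_eq_zero (e : E) {a b : V} (h : s(D.tail e, D.head e) ≠ s(a, b)) :
    D.edgeSign e a b = 0 := by
  unfold edgeSign
  rw [if_neg, if_neg, sub_zero] <;> rintro ⟨rfl, rfl⟩ <;> simp at h

lemma edgeSign_tail_head (e : E) : D.edgeSign e (D.tail e) (D.head e) = 1 := by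
  simp [edgeSign, (D.edge_adj e).ne]

lemma Bmat_apply [Fintype V] (e : E) (w : V) : Bmat D e w = ∑ a, D.edgeSign e a w := by
  have := (D.edge_adj e).ne
  simp only [Bmat, edgeSign, ite_and, sum_sub_distrib, sum_ite_eq, mem_univ, if_true,
    sum_ite_irrel, sum_const_zero]
  split_ifs <;> grind

lemma Cmat_apply [Fintype T] (τ : T) (e : E) :
    Cmat D τ e = D.edgeSign e (D.tri1 τ) (D.tri2 τ) + D.edgeSign e (D.tri2 τ) (D.tri3 τ)
      + D.edgeSign e (D.tri3 τ) (D.tri1 τ) := by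
  have h₁ := (D.tri_adj12 τ).ne
  have h₂ := (D.tri_adj23 τ).ne
  have h₃ := (D.tri_adj31 τ).ne
  have h := (D.edge_adj e).ne
  simp only [Cmat, edgeSign, Prod.mk.injEq]
  split_ifs <;> grind

variable [Fintype E]

def flow : (E → ℝ) →ₗ[ℝ] (V → V → ℝ) where
  toFun x a b := ∑ e, x e * D.edgeSign e a b
  map_add' x y := by ext a b; simp [add_mul, sum_add_distrib]
  map_smul' r x := by ext a b; simp [mul_sum, mul_assoc]

lemma flow_apply (x : E → ℝ) (a b : V) : D.flow x a b = ∑ e, x e * D.edgeSign e a b := rfl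

lemma flow_antisymm (x : E → ℝ) (a b : V) : D.flow x a b = -D.flow x b a := by
  simp [flow_apply, D.edgeSign_swap _ a b, ← sum_neg_distrib]

lemma flow_eq_of_sym2_eq (x : E → ℝ) {e : E} {a b : V}
    (he : s(D.tail e, D.head e) = s(a, b)) : D.flow x a b = x e * D.edgeSign e a b := by
  refine sum_eq_single e (fun e' _ hne => ?_) (by simp)
  rw [D.edgeSign_eq_zero e' fun he' => hne (D.edge_inj e' e (he'.trans he.symm)), mul_zero]

lemma flow_tail_head (x : E → ℝ) (e : E) : D.flow x (D.tail e) (D.head e) = x e := by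
  rw [D.flow_eq_of_sym2_eq x rfl, edgeSign_tail_head, mul_one]

lemma flow_eq_zero_of_not_adj (x : E → ℝ) {a b : V} (h : ¬D.G.Adj a b) :
    D.flow x a b = 0 := by
  refine sum_eq_zero fun e _ => ?_
  rw [D.edgeSign_eq_zero e, mul_zero]
  intro he
  exact h (by rw [← SimpleGraph.mem_edgeSet, ← he]; exact D.edge_adj e)

lemma flow_of_edge_values {f : V → V → ℝ} (hf : ∀ a b, f a b = -f b a)
    (hG : ∀ a b, ¬D.G.Adj a b → f a b = 0) : D.flow (fun e => f (D.tail e) (D.head e)) = f := by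
  ext a b
  by_cases hab : D.G.Adj a b
  · obtain ⟨e, he⟩ := D.edge_surj a b hab
    rw [D.flow_eq_of_sym2_eq _ he]
    rcases Sym2.eq_iff.mp he with ⟨rfl, rfl⟩ | ⟨rfl, rfl⟩
    · rw [edgeSign_tail_head, mul_one]
    · rw [edgeSign_swap, edgeSign_tail_head, hf]
      ring
  · rw [D.flow_eq_zero_of_not_adj _ hab, hG a b hab]

lemma flow_injective : Function.Injective D.flow := fun x y h =>
  funext fun e => by rw [← D.flow_tail_head x e, h, flow_tail_head]

lemma transpose_Bmat_mulVec_apply [Fintype V] (x : E → ℝ) (w : V) :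
    ((Bmat D)ᵀ *ᵥ x) w = ∑ a, D.flow x a w := by
  simp only [mulVec, dotProduct, transpose_apply, Bmat_apply, flow_apply, sum_mul]
  rw [sum_comm]
  simp only [mul_comm]

lemma Cmat_mulVec_apply [Fintype T] (x : E → ℝ) (τ : T) :
    (Cmat D *ᵥ x) τ = D.flow x (D.tri1 τ) (D.tri2 τ) + D.flow x (D.tri2 τ) (D.tri3 τ)
      + D.flow x (D.tri3 τ) (D.tri1 τ) := by
  simp only [mulVec, dotProduct, Cmat_apply, flow_apply, ← sum_add_distrib]
  exact sum_congr rfl fun e _ => by ring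

variable [Fintype V] [Fintype T]

lemma mem_ker_Hmat_iff (x : E → ℝ) :
    x ∈ LinearMap.ker (Hmat D).mulVecLin ↔ (Bmat D)ᵀ *ᵥ x = 0 ∧ Cmat D *ᵥ x = 0 := by
  rw [LinearMap.mem_ker, mulVecLin_apply, Hmat, ← transpose_mul_self_add_mulVec_eq_zero_iff,
    transpose_transpose]

lemma flow_mem_harmonicFlows_iff (x : E → ℝ) :
    D.flow x ∈ D.G.harmonicFlows ↔ x ∈ LinearMap.ker (Hmat D).mulVecLin := by
  rw [mem_ker_Hmat_iff]
  refine ⟨fun h => ⟨funext fun w => ?_, funext fun τ => ?_⟩, fun ⟨hB, hC⟩ =>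
    ⟨D.flow_antisymm x, fun a b => D.flow_eq_zero_of_not_adj x, fun w => ?_,
      fun a b c hab hbc hca => ?_⟩⟩
  · rw [transpose_Bmat_mulVec_apply]
    exact h.sum_left_eq_zero w
  · rw [Cmat_mulVec_apply]
    exact h.cyclic_sum_eq_zero _ _ _ (D.tri_adj12 τ) (D.tri_adj23 τ) (D.tri_adj31 τ)
  · rw [← transpose_Bmat_mulVec_apply, hB, Pi.zero_apply]
  · obtain ⟨τ, hτ⟩ := D.tri_surj a b c hab hbc hca
    refine cyclic_sum_eq_zero_of_set_eq (D.flow_antisymm x) hab.ne hbc.ne hca.ne hτ ?_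
    rw [← Cmat_mulVec_apply, hC, Pi.zero_apply]

lemma map_flow_ker_Hmat :
    (LinearMap.ker (Hmat D).mulVecLin).map D.flow = D.G.harmonicFlows := by
  ext f
  refine ⟨fun ⟨x, hx, hxf⟩ => hxf ▸ (D.flow_mem_harmonicFlows_iff x).mpr hx, fun hf => ?_⟩
  have hflow := D.flow_of_edge_values hf.antisymm hf.eq_zero_of_not_adj
  exact ⟨_, (D.flow_mem_harmonicFlows_iff _).mp (by rwa [hflow]), hflow⟩

lemma nullity_eq_finrank_harmonicFlows : nullity D = Module.finrank ℝ D.G.harmonicFlows := by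
  rw [nullity, ← map_flow_ker_Hmat]
  exact (Submodule.equivMapOfInjective _ D.flow_injective _).finrank_eq

end GraphData

section Pushforward

variable {W : Type*} [Fintype V] [DecidableEq W] (p : V → W)

def pushforward : (V → V → ℝ) →ₗ[ℝ] (W → W → ℝ) where
  toFun f a' b' := ∑ a with p a = a', ∑ b with p b = b', f a b
  map_add' f g := by ext a' b'; simp [sum_add_distrib]
  map_smul' r f := by ext a' b'; simp [mul_sum]

lemma pushforward_apply (f : V → V → ℝ) (a' b' : W) :
    pushforward p f a' b' = ∑ a with p a = a', ∑ b with p b = b', f a b := rfl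

variable {p}

lemma pushforward_antisymm {f : V → V → ℝ} (hf : ∀ a b, f a b = -f b a) (a' b' : W) :
    pushforward p f a' b' = -pushforward p f b' a' := by
  rw [pushforward_apply, pushforward_apply, sum_comm, ← sum_neg_distrib]
  simp only [← sum_neg_distrib, ← hf]

lemma pushforward_apply_self {f : V → V → ℝ} (hf : ∀ a b, f a b = -f b a) (a' : W) :
    pushforward p f a' a' = 0 :=
  sum_sum_eq_zero_of_antisymm hf _

lemma sum_pushforward_apply [Fintype W] (f : V → V → ℝ) (w' : W) :
    ∑ a', pushforward p f a' w' = ∑ b with p b = w', ∑ a, f a b := by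
  simp only [pushforward_apply]
  rw [sum_fiberwise univ p fun a => ∑ b with p b = w', f a b, sum_comm]

lemma pushforward_apply_of_unique {f : V → V → ℝ} {a b : V}
    (h : ∀ a₁ b₁, p a₁ = p a → p b₁ = p b → f a₁ b₁ ≠ 0 → a₁ = a ∧ b₁ = b) :
    pushforward p f (p a) (p b) = f a b := by
  rw [pushforward_apply, sum_eq_single_of_mem a (by simp), sum_eq_single_of_mem b (by simp)]
  · intro b₁ hb₁ hne
    by_contra h₁
    exact hne (h a b₁ rfl (mem_filter.mp hb₁).2 h₁).2
  · intro a₁ ha₁ hne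
    refine sum_eq_zero fun b₁ hb₁ => ?_
    by_contra h₁
    exact hne (h a₁ b₁ (mem_filter.mp ha₁).2 (mem_filter.mp hb₁).2 h₁).1

end Pushforward

section MergeMap

variable [DecidableEq V] {u v : V} (hne : u ≠ v)

def mergeMap (w : V) : {x : V // x ≠ v} :=
  if h : w = v then ⟨u, hne⟩ else ⟨w, h⟩

lemma coe_mergeMap (w : V) : (mergeMap hne w : V) = if w = v then u else w := by
  unfold mergeMap
  split_ifs <;> rfl

lemma mergeMap_coe (a : {x : V // x ≠ v}) : mergeMap hne a = a := dif_neg a.2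

lemma mergeMap_eq_mergeMap_iff {a b : V} :
    mergeMap hne a = mergeMap hne b ↔ a = b ∨ (a = u ∨ a = v) ∧ (b = u ∨ b = v) := by
  rw [Subtype.ext_iff, coe_mergeMap, coe_mergeMap]
  split_ifs <;> grind

variable [Fintype V]

lemma filter_mergeMap_eq_of_ne {w : V} (hwu : w ≠ u) (hwv : w ≠ v) :
    univ.filter (fun b => mergeMap hne b = mergeMap hne w) = {w} := by
  ext b
  simp only [mem_filter, mem_univ, true_and, mem_singleton, mergeMap_eq_mergeMap_iff]
  grind

lemma filter_mergeMap_eq_left :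
    univ.filter (fun b => mergeMap hne b = mergeMap hne u) = {u, v} := by
  ext b
  simp [mergeMap_eq_mergeMap_iff]

end MergeMap

namespace SimpleGraph

/-- The contraction `G / uv` of the paper, with `v` merged into `u`. -/
def contract (G : SimpleGraph V) (u v : V) : SimpleGraph {x : V // x ≠ v} where
  Adj a b := a ≠ b ∧ (G.Adj a b ∨ ((a : V) = u ∧ G.Adj v b) ∨ ((b : V) = u ∧ G.Adj a v))
  symm := ⟨fun a b => by
    rintro ⟨hne, h | h | h⟩
    · exact ⟨hne.symm, .inl h.symm⟩
    · exact ⟨hne.symm, .inr (.inr ⟨h.1, h.2.symm⟩)⟩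
    · exact ⟨hne.symm, .inr (.inl ⟨h.1, h.2.symm⟩)⟩⟩
  loopless := ⟨fun _ h => h.1 rfl⟩

lemma contract_adj {G : SimpleGraph V} {u v : V} {a b : {x : V // x ≠ v}} :
    (G.contract u v).Adj a b ↔
      a ≠ b ∧ (G.Adj a b ∨ ((a : V) = u ∧ G.Adj v b) ∨ ((b : V) = u ∧ G.Adj a v)) :=
  Iff.rfl

open Classical in
noncomputable def pullback {W : Type*} (G : SimpleGraph V) (p : V → W) (g : W → W → ℝ)
    (a b : V) : ℝ :=
  if G.Adj a b then g (p a) (p b) else 0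

variable {W : Type*} {G : SimpleGraph V} {u v : V}

lemma pullback_of_adj (p : V → W) (g : W → W → ℝ) {a b : V} (h : G.Adj a b) :
    G.pullback p g a b = g (p a) (p b) := by
  simp [pullback, h]

lemma pullback_of_not_adj (p : V → W) (g : W → W → ℝ) {a b : V} (h : ¬G.Adj a b) :
    G.pullback p g a b = 0 := by
  simp [pullback, h]

lemma pullback_antisymm (p : V → W) {g : W → W → ℝ} (hg : ∀ a b, g a b = -g b a) (a b : V) :
    G.pullback p g a b = -G.pullback p g b a := by
  by_cases h : G.Adj a b
  · rw [pullback_of_adj p g h, pullback_of_adj p g h.symm, hg]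
  · rw [pullback_of_not_adj p g h, pullback_of_not_adj p g (mt G.adj_symm h), neg_zero]

lemma pullback_eq_zero_of_eq {p : V → W} {g : W → W → ℝ} (hg : ∀ a b, g a b = -g b a)
    {a b : V} (h : p a = p b) : G.pullback p g a b = 0 := by
  by_cases hab : G.Adj a b
  · rw [pullback_of_adj p g hab, h]
    linarith [hg (p b) (p b)]
  · exact pullback_of_not_adj p g hab

lemma IsBridge.ne (hb : G.IsBridge s(u, v)) : u ≠ v := by
  rintro rfl
  exact isBridge_iff.mp hb (Reachable.refl _)

lemma IsBridge.not_adj_of_adj (hb : G.IsBridge s(u, v)) {w : V} (huw : G.Adj u w) :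
    ¬G.Adj v w := fun hvw => by
  have := isBridge_iff_forall_walk_mem_edges.mp hb (.cons huw (.cons hvw.symm .nil))
  simp only [Walk.edges_cons, Walk.edges_nil, List.mem_cons, List.not_mem_nil, or_false,
    Sym2.eq_iff] at this
  grind [huw.ne, hvw.ne]

lemma IsBridge.not_adj_of_adj_of_adj (hb : G.IsBridge s(u, v)) {a b : V} (hua : G.Adj u a)
    (hab : G.Adj a b) (hav : a ≠ v) (hbu : b ≠ u) : ¬G.Adj b v := fun hbv => by
  have := isBridge_iff_forall_walk_mem_edges.mp hb (.cons hua (.cons hab (.cons hbv .nil)))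
  simp only [Walk.edges_cons, Walk.edges_nil, List.mem_cons, List.not_mem_nil, or_false,
    Sym2.eq_iff] at this
  grind [hua.ne, hab.ne, hbv.ne]

lemma IsBridge.exists_cut [Fintype V] (hb : G.IsBridge s(u, v)) :
    ∃ S : Finset V, u ∈ S ∧ v ∉ S ∧ ∀ a ∉ S, ∀ b ∈ S, G.Adj a b → a = v ∧ b = u := by
  classical
  refine ⟨univ.filter ((G.deleteEdges {s(u, v)}).Reachable u), by simp,
    by simpa using isBridge_iff.mp hb, fun a ha b hb' hab => ?_⟩
  simp only [mem_filter, mem_univ, true_and] at ha hb'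
  by_cases he : s(a, b) = s(u, v)
  · rcases Sym2.eq_iff.mp he with ⟨rfl, rfl⟩ | ⟨rfl, rfl⟩
    · exact absurd (Reachable.refl _) ha
    · exact ⟨rfl, rfl⟩
  · have hba : (G.deleteEdges {s(u, v)}).Adj b a := by
      simp [deleteEdges_adj, hab.symm, he, Sym2.eq_swap]
    exact absurd (hb'.trans hba.reachable) ha

variable [DecidableEq V]

lemma contract_adj_mergeMap (hne : u ≠ v) {a b : V} (hab : G.Adj a b)
    (h : mergeMap hne a ≠ mergeMap hne b) :
    (G.contract u v).Adj (mergeMap hne a) (mergeMap hne b) := by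
  refine contract_adj.mpr ⟨h, ?_⟩
  simp only [coe_mergeMap]
  split_ifs with ha hb hb'
  · exact absurd (ha.trans hb.symm) hab.ne
  · exact .inr (.inl ⟨rfl, ha ▸ hab⟩)
  · exact .inr (.inr ⟨rfl, hb' ▸ hab⟩)
  · exact .inl hab

lemma exists_adj_of_contract_adj (hne : u ≠ v) {a' b' : {x : V // x ≠ v}}
    (h : (G.contract u v).Adj a' b') :
    ∃ a b, mergeMap hne a = a' ∧ mergeMap hne b = b' ∧ G.Adj a b := by
  have hu : ∀ c : {x : V // x ≠ v}, (c : V) = u → mergeMap hne v = c := fun c hc =>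
    Subtype.ext (by simp [coe_mergeMap, hc])
  rcases (contract_adj.mp h).2 with h | ⟨ha, h⟩ | ⟨hb, h⟩
  · exact ⟨a', b', mergeMap_coe hne a', mergeMap_coe hne b', h⟩
  · exact ⟨v, b', hu a' ha, mergeMap_coe hne b', h⟩
  · exact ⟨a', v, mergeMap_coe hne a', hu b' hb, h⟩

lemma IsBridge.eq_of_adj_of_mergeMap_eq (hb : G.IsBridge s(u, v)) {a b a₁ b₁ : V}
    (hab : G.Adj a b) (hab₁ : G.Adj a₁ b₁) (ha : mergeMap hb.ne a₁ = mergeMap hb.ne a)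
    (hb' : mergeMap hb.ne b₁ = mergeMap hb.ne b) (hne : mergeMap hb.ne a ≠ mergeMap hb.ne b) :
    a₁ = a ∧ b₁ = b := by
  have := @hb.not_adj_of_adj
  rw [Ne, mergeMap_eq_mergeMap_iff] at hne
  rw [mergeMap_eq_mergeMap_iff] at ha hb'
  grind [G.adj_symm, G.loopless]

lemma IsBridge.mergeMap_ne_of_adj_of_adj (hb : G.IsBridge s(u, v)) {a b c : V} (hac : G.Adj a c)
    (hcb : G.Adj c b) (hab : a ≠ b) : mergeMap hb.ne a ≠ mergeMap hb.ne b := by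
  have := @hb.not_adj_of_adj
  rw [Ne, mergeMap_eq_mergeMap_iff]
  grind [G.adj_symm]

lemma IsBridge.exists_triangle_of_contract_of_ne (hb : G.IsBridge s(u, v))
    {a' b' c' : {x : V // x ≠ v}} (h₁ : (G.contract u v).Adj a' b')
    (h₂ : (G.contract u v).Adj b' c') (h₃ : (G.contract u v).Adj c' a')
    (hbu : (b' : V) ≠ u) (hcu : (c' : V) ≠ u) :
    ∃ a b c, mergeMap hb.ne a = a' ∧ mergeMap hb.ne b = b' ∧ mergeMap hb.ne c = c' ∧
      G.Adj a b ∧ G.Adj b c ∧ G.Adj c a := by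
  have hbc : G.Adj b' c' := by
    rcases (contract_adj.mp h₂).2 with h | ⟨h, _⟩ | ⟨h, _⟩
    exacts [h, absurd h hbu, absurd h hcu]
  have hca' : G.Adj c' a' ∨ (a' : V) = u ∧ G.Adj c' v := by
    rcases (contract_adj.mp h₃).2 with h | ⟨h, _⟩ | h
    exacts [.inl h, absurd h hcu, .inr h]
  have hab' : G.Adj a' b' ∨ (a' : V) = u ∧ G.Adj v b' := by
    rcases (contract_adj.mp h₁).2 with h | h | ⟨h, _⟩
    exacts [.inl h, .inr h, absurd h hbu]
  rcases hab' with hab | ⟨hau, hvb⟩ <;> rcases hca' with hca | ⟨hau', hcv⟩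
  · exact ⟨a', b', c', mergeMap_coe _ _, mergeMap_coe _ _, mergeMap_coe _ _, hab, hbc, hca⟩
  · exact absurd hcv (hb.not_adj_of_adj_of_adj (hau' ▸ hab) hbc b'.2 hcu)
  · exact absurd hvb.symm (hb.not_adj_of_adj_of_adj (hau ▸ hca.symm) hbc.symm c'.2 hbu)
  · refine ⟨v, b', c', Subtype.ext ?_, mergeMap_coe _ _, mergeMap_coe _ _, hvb, hbc, hcv⟩
    simp [coe_mergeMap, hau]

lemma IsBridge.exists_triangle_of_contract (hb : G.IsBridge s(u, v))
    {a' b' c' : {x : V // x ≠ v}} (h₁ : (G.contract u v).Adj a' b')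
    (h₂ : (G.contract u v).Adj b' c') (h₃ : (G.contract u v).Adj c' a') :
    ∃ a b c, mergeMap hb.ne a = a' ∧ mergeMap hb.ne b = b' ∧ mergeMap hb.ne c = c' ∧
      G.Adj a b ∧ G.Adj b c ∧ G.Adj c a := by
  have ne : ∀ {x y : {x : V // x ≠ v}}, (G.contract u v).Adj x y → (x : V) = u → (y : V) ≠ u :=
    fun h hx hy => h.ne (Subtype.ext (hx.trans hy.symm))
  by_cases hbu : (b' : V) = u
  · obtain ⟨b, c, a, hb', hc', ha', hbc, hca, hab⟩ :=
      hb.exists_triangle_of_contract_of_ne h₂ h₃ h₁ (ne h₂ hbu) (ne h₁.symm hbu)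
    exact ⟨a, b, c, ha', hb', hc', hab, hbc, hca⟩
  by_cases hcu : (c' : V) = u
  · obtain ⟨c, a, b, hc', ha', hb', hca, hab, hbc⟩ :=
      hb.exists_triangle_of_contract_of_ne h₃ h₁ h₂ (ne h₃ hcu) hbu
    exact ⟨a, b, c, ha', hb', hc', hab, hbc, hca⟩
  exact hb.exists_triangle_of_contract_of_ne h₁ h₂ h₃ hbu hcu

variable [Fintype V]

lemma IsBridge.exists_sum_sum_eq (hb : G.IsBridge s(u, v)) {f : V → V → ℝ}
    (hf : ∀ a b, f a b = -f b a) (hG : ∀ a b, ¬G.Adj a b → f a b = 0) :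
    ∃ S : Finset V, u ∈ S ∧ v ∉ S ∧ ∑ b ∈ S, ∑ a, f a b = f v u := by
  obtain ⟨S, hu, hv, hS⟩ := hb.exists_cut
  exact ⟨S, hu, hv, sum_sum_eq_of_cut hf hu hv fun a ha b hb' h =>
    hS a ha b hb' (not_not.mp (mt (hG a b) h))⟩

lemma IsHarmonicFlow.apply_eq_zero_of_isBridge {f : V → V → ℝ} (hf : G.IsHarmonicFlow f)
    (hb : G.IsBridge s(u, v)) : f u v = 0 := by
  obtain ⟨S, -, -, hS⟩ := hb.exists_sum_sum_eq hf.antisymm hf.eq_zero_of_not_adj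
  rw [hf.antisymm, ← hS, sum_eq_zero fun b _ => hf.sum_left_eq_zero b, neg_zero]

lemma IsBridge.pushforward_mergeMap_apply (hb : G.IsBridge s(u, v)) {f : V → V → ℝ}
    (hG : ∀ a b, ¬G.Adj a b → f a b = 0) {a b : V} (hab : G.Adj a b)
    (hne : mergeMap hb.ne a ≠ mergeMap hb.ne b) :
    pushforward (mergeMap hb.ne) f (mergeMap hb.ne a) (mergeMap hb.ne b) = f a b :=
  pushforward_apply_of_unique fun _ _ ha hb' h =>
    hb.eq_of_adj_of_mergeMap_eq hab (not_not.mp (mt (hG _ _) h)) ha hb' hne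

lemma IsBridge.pushforward_mem_harmonicFlows (hb : G.IsBridge s(u, v)) {f : V → V → ℝ}
    (hf : f ∈ G.harmonicFlows) :
    pushforward (mergeMap hb.ne) f ∈ (G.contract u v).harmonicFlows := by
  refine ⟨pushforward_antisymm hf.antisymm, fun a' b' h => ?_, fun w' => ?_,
    fun a' b' c' h₁ h₂ h₃ => ?_⟩
  · obtain rfl | hne := eq_or_ne a' b'
    · exact pushforward_apply_self hf.antisymm a'
    refine sum_eq_zero fun a ha => sum_eq_zero fun b hb' => ?_
    rw [mem_filter] at ha hb'
    by_contra hab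
    rw [← ha.2, ← hb'.2] at h hne
    exact h (contract_adj_mergeMap hb.ne (not_not.mp (mt (hf.eq_zero_of_not_adj a b) hab)) hne)
  · rw [sum_pushforward_apply]
    exact sum_eq_zero fun b _ => hf.sum_left_eq_zero b
  · obtain ⟨a, b, c, rfl, rfl, rfl, hab, hbc, hca⟩ := hb.exists_triangle_of_contract h₁ h₂ h₃
    rw [hb.pushforward_mergeMap_apply hf.eq_zero_of_not_adj hab h₁.ne,
      hb.pushforward_mergeMap_apply hf.eq_zero_of_not_adj hbc h₂.ne,
      hb.pushforward_mergeMap_apply hf.eq_zero_of_not_adj hca h₃.ne]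
    exact hf.cyclic_sum_eq_zero a b c hab hbc hca

lemma IsBridge.pushforward_pullback (hb : G.IsBridge s(u, v)) {g : {x : V // x ≠ v} → _ → ℝ}
    (hg : g ∈ (G.contract u v).harmonicFlows) :
    pushforward (mergeMap hb.ne) (G.pullback (mergeMap hb.ne) g) = g := by
  ext a' b'
  by_cases h : (G.contract u v).Adj a' b'
  · obtain ⟨a, b, rfl, rfl, hab⟩ := exists_adj_of_contract_adj hb.ne h
    rw [hb.pushforward_mergeMap_apply (fun _ _ => pullback_of_not_adj _ g) hab h.ne,
      pullback_of_adj _ g hab]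
  · rw [hg.eq_zero_of_not_adj a' b' h]
    refine sum_eq_zero fun a ha => sum_eq_zero fun b hb' => ?_
    rw [mem_filter] at ha hb'
    by_cases hab : G.Adj a b
    · rw [pullback_of_adj _ g hab, ha.2, hb'.2, hg.eq_zero_of_not_adj a' b' h]
    · exact pullback_of_not_adj _ g hab

lemma IsBridge.pullback_pushforward (hb : G.IsBridge s(u, v)) {f : V → V → ℝ}
    (hf : f ∈ G.harmonicFlows) :
    G.pullback (mergeMap hb.ne) (pushforward (mergeMap hb.ne) f) = f := by
  ext a b
  by_cases hab : G.Adj a b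
  · rw [pullback_of_adj _ _ hab]
    by_cases heq : mergeMap hb.ne a = mergeMap hb.ne b
    · have huv := hf.apply_eq_zero_of_isBridge hb
      rw [heq, pushforward_apply_self hf.antisymm]
      rw [mergeMap_eq_mergeMap_iff] at heq
      rcases heq with rfl | ⟨rfl | rfl, rfl | rfl⟩
      · exact absurd rfl hab.ne
      · exact absurd rfl hab.ne
      · exact huv.symm
      · rw [hf.antisymm, huv, neg_zero]
      · exact absurd rfl hab.ne
    · exact hb.pushforward_mergeMap_apply hf.eq_zero_of_not_adj hab heq
  · rw [pullback_of_not_adj _ _ hab, hf.eq_zero_of_not_adj a b hab]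

lemma IsBridge.pullback_mem_harmonicFlows (hb : G.IsBridge s(u, v))
    {g : {x : V // x ≠ v} → _ → ℝ} (hg : g ∈ (G.contract u v).harmonicFlows) :
    G.pullback (mergeMap hb.ne) g ∈ G.harmonicFlows := by
  set f := G.pullback (mergeMap hb.ne) g
  have hf : ∀ a b, f a b = -f b a := pullback_antisymm _ hg.antisymm
  have hfG : ∀ a b, ¬G.Adj a b → f a b = 0 := fun a b => pullback_of_not_adj _ g
  have hfibre : ∀ w, ∑ b with mergeMap hb.ne b = mergeMap hb.ne w, ∑ a, f a b = 0 := fun w => by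
    rw [← sum_pushforward_apply, hb.pushforward_pullback hg]
    exact hg.sum_left_eq_zero _
  have hdiv_of_ne : ∀ w, w ≠ u → w ≠ v → ∑ a, f a w = 0 := fun w hwu hwv => by
    simpa [filter_mergeMap_eq_of_ne hb.ne hwu hwv] using hfibre w
  -- The net flow into the side `S` of `u` is `f v u`, which vanishes as `u`, `v` merge.
  have hdiv_u : ∑ a, f a u = 0 := by
    obtain ⟨S, huS, hvS, hS⟩ := hb.exists_sum_sum_eq hf hfG
    rw [sum_eq_single_of_mem u huS fun b hbS hbu =>
      hdiv_of_ne b hbu (ne_of_mem_of_not_mem hbS hvS)] at hS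
    rw [hS]
    exact pullback_eq_zero_of_eq hg.antisymm
      ((mergeMap_eq_mergeMap_iff hb.ne).mpr (.inr ⟨.inr rfl, .inl rfl⟩))
  have hdiv_v : ∑ a, f a v = 0 := by
    simpa [filter_mergeMap_eq_left, sum_pair hb.ne, hdiv_u] using hfibre u
  refine ⟨hf, hfG, fun w => ?_, fun a b c hab hbc hca => ?_⟩
  · by_cases hwu : w = u
    · exact hwu ▸ hdiv_u
    by_cases hwv : w = v
    · exact hwv ▸ hdiv_v
    exact hdiv_of_ne w hwu hwv
  · have adj : ∀ {a b c}, G.Adj a b → G.Adj b c → G.Adj c a →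
        (G.contract u v).Adj (mergeMap hb.ne a) (mergeMap hb.ne b) := fun hab hbc hca =>
      contract_adj_mergeMap hb.ne hab (hb.mergeMap_ne_of_adj_of_adj hca.symm hbc.symm hab.ne)
    simp only [f, pullback_of_adj _ g hab, pullback_of_adj _ g hbc, pullback_of_adj _ g hca]
    exact hg.cyclic_sum_eq_zero _ _ _ (adj hab hbc hca) (adj hbc hca hab) (adj hca hab hbc)

lemma IsBridge.finrank_harmonicFlows_contract (hb : G.IsBridge s(u, v)) :
    Module.finrank ℝ G.harmonicFlows = Module.finrank ℝ (G.contract u v).harmonicFlows := by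
  let push := (pushforward (mergeMap hb.ne)).restrict
    fun _ hf => hb.pushforward_mem_harmonicFlows hf
  have hinj : Function.Injective push := fun f₁ f₂ h => Subtype.ext <| by
    rw [← hb.pullback_pushforward f₁.2, ← hb.pullback_pushforward f₂.2]
    exact congrArg (G.pullback _ ∘ Subtype.val) h
  have hsurj : Function.Surjective push := fun g =>
    ⟨⟨_, hb.pullback_mem_harmonicFlows g.2⟩, Subtype.ext (hb.pushforward_pullback g.2)⟩
  exact (LinearEquiv.ofBijective push ⟨hinj, hsurj⟩).finrank_eq

end SimpleGraph

theorem helmholtzian_nullity_bridge_contraction {V E T E' T' : Type*}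
    [DecidableEq V] [Fintype V] [Fintype E] [Fintype T] [Fintype E'] [Fintype T']
    (D : GraphData V E T) (u v : V) (hbridge : D.G.IsBridge s(u, v))
    (D' : GraphData {x : V // x ≠ v} E' T')
    (hG' : ∀ a b : {x : V // x ≠ v}, D'.G.Adj a b ↔
      (a ≠ b ∧ (D.G.Adj (a : V) (b : V) ∨ ((a : V) = u ∧ D.G.Adj v (b : V)) ∨
        ((b : V) = u ∧ D.G.Adj (a : V) v)))) :
    nullity D = nullity D' := by
  have hD' : D'.G = D.G.contract u v := SimpleGraph.ext <| funext₂ fun a b => propext (hG' a b)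
  rw [D.nullity_eq_finrank_harmonicFlows, D'.nullity_eq_finrank_harmonicFlows, hD']
  exact hbridge.finrank_harmonicFlows_contract
end
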